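/- Let k and p be positive integers with pk ≥ 3, and let C_{pk}: u_1 u_2 … u_{pk} u_1 be the cycle of order pk. A set X of vertices of C_{pk} is a minimum k-vertex cover in C_{pk} if and only if X = { u_{i+(j−1)k} : j ∈ {1,…,p} } for some i ∈ {1,…,k} (indices taken modulo pk). -/

import Mathlib

open SimpleGraph

/-- `S` is the vertex set of a (not necessarily induced) path of order `k` in `G`,
i.e. a `k`-path of `G`. -/
def IsPathSupport {V : Type*} (k : ℕ) (G : SimpleGraph V) (S : Set V) : Prop :=
  ∃ (u v : V) (p : G.Walk u v), p.IsPath ∧ p.support.length = k ∧ S = {x | x ∈ p.support}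

/-- `X` is a `k`-vertex cover of `G`: every `k`-path of `G` contains a vertex of `X`. -/
def IsKVertexCover {V : Type*} (k : ℕ) (G : SimpleGraph V) (X : Finset V) : Prop :=
  ∀ S : Set V, IsPathSupport k G S → ∃ x ∈ X, x ∈ S

/-- The `k`-matching number `ν_k(G)`: the maximum number of pairwise disjoint
`k`-paths of `G`. -/
noncomputable def nuK {V : Type*} (k : ℕ) (G : SimpleGraph V) : ℕ :=
  sSup {n | ∃ M : Finset (Set V), (∀ S ∈ M, IsPathSupport k G S) ∧
    (↑M : Set (Set V)).Pairwise Disjoint ∧ M.card = n}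

/-- The `k`-vertex cover number `τ_k(G)`: the minimum cardinality of a `k`-vertex cover. -/
noncomputable def tauK {V : Type*} (k : ℕ) (G : SimpleGraph V) : ℕ :=
  sInf {n | ∃ X : Finset V, IsKVertexCover k G X ∧ X.card = n}

/-- `G` belongs to the class `𝒢_k`: `ν_k(H) = τ_k(H)` for every induced subgraph `H` of `G`. -/
def memGclass {V : Type*} (k : ℕ) (G : SimpleGraph V) : Prop :=
  ∀ s : Set V, nuK k (G.induce s) = tauK k (G.induce s)

/-- The cycle graph of order `n`, with vertex set `ZMod n` (for `n ≥ 3`);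
the vertex `u_t` of the paper is `(t : ZMod n)`. -/
def cycleG (n : ℕ) : SimpleGraph (ZMod n) :=
  SimpleGraph.fromRel (fun x y => y = x + 1)

/-! A `k`-path of `C_n` (`k ≤ n`) is a window of `k` cyclically consecutive vertices
`{a, a + 1, …, a + k - 1}`, so it runs through every residue class modulo `k`, and every window
is a `k`-path. Each vertex of `C_{pk}` lies in exactly `k` of the `pk` windows, so by double
counting a set meeting every window has at least `p` elements, and one with exactly `p` elements
meets every window exactly once. Comparing the windows at `x` and `x + 1` then shows that such a
minimum cover is closed under `x ↦ x + k`: it is a residue class modulo `k`, and these classes are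
exactly the sets `{u_{i+(j-1)k}}`. -/

open Finset

lemma SimpleGraph.exists_walk_support_eq_map_range {V : Type*} {G : SimpleGraph V} (f : ℕ → V)
    (m : ℕ) (hf : ∀ i < m, G.Adj (f i) (f (i + 1))) :
    ∃ w : G.Walk (f 0) (f m), w.support = (List.range (m + 1)).map f := by
  induction m with
  | zero => exact ⟨Walk.nil, rfl⟩
  | succ m ih =>
    obtain ⟨w, hw⟩ := ih fun i hi => hf i (by omega)
    refine ⟨w.concat (hf m (by omega)), ?_⟩
    rw [Walk.support_concat, hw, List.range_succ (n := m + 1), List.map_append]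
    rfl

lemma ZMod.natCast_inj_of_lt {n a b : ℕ} (ha : a < n) (hb : b < n) (h : (a : ZMod n) = b) :
    a = b := by
  rwa [ZMod.natCast_eq_natCast_iff', Nat.mod_eq_of_lt ha, Nat.mod_eq_of_lt hb] at h

section Cycle

variable {n k : ℕ}

lemma cycleG_adj {x y : ZMod n} : (cycleG n).Adj x y ↔ x ≠ y ∧ (y = x + 1 ∨ x = y + 1) := by
  simp [cycleG, SimpleGraph.fromRel_adj]

lemma cycleG_adj_add_one (hn : 1 < n) (a : ZMod n) : (cycleG n).Adj a (a + 1) := by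
  have : Fact (1 < n) := ⟨hn⟩
  simp [cycleG_adj]

def window (a : ZMod n) (k : ℕ) : Finset (ZMod n) :=
  (range k).image fun m : ℕ => a + m

lemma mem_window {a x : ZMod n} : x ∈ window a k ↔ ∃ m < k, a + m = x := by
  simp [window]

lemma window_isPathSupport (hk : 0 < k) (hkn : k ≤ n) (a : ZMod n) :
    IsPathSupport k (cycleG n) (window a k) := by
  obtain ⟨w, hw⟩ := exists_walk_support_eq_map_range (G := cycleG n)
    (fun m : ℕ => a + (m : ZMod n)) (k - 1)
    fun i hi => by simpa [add_assoc] using cycleG_adj_add_one (by omega) (a + (i : ZMod n))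
  have hsupp : w.support = (List.range k).map fun m : ℕ => a + m := by
    rw [hw, Nat.sub_add_cancel hk]
  refine ⟨_, _, w, ?_, by simp [hsupp], ?_⟩
  · rw [Walk.isPath_def, hsupp]
    refine List.nodup_range.map_on fun i hi j hj hij => ?_
    rw [List.mem_range] at hi hj
    exact ZMod.natCast_inj_of_lt (by omega) (by omega) (add_left_cancel hij)
  · ext x
    simp [hsupp, mem_window]

lemma exists_support_eq_of_isPath {u v : ZMod n} (w : (cycleG n).Walk u v) (hw : w.IsPath) :
    ∃ ε : ZMod n, (ε = 1 ∨ ε = -1) ∧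
      w.support = (List.range (w.length + 1)).map fun m : ℕ => u + m * ε := by
  induction w with
  | nil => exact ⟨1, Or.inl rfl, by simp⟩
  | @cons a b c h q ih =>
    obtain ⟨hq, ha⟩ := Walk.cons_isPath_iff h q |>.1 hw
    obtain ⟨δ, hδ, rfl⟩ : ∃ δ : ZMod n, (δ = 1 ∨ δ = -1) ∧ a + δ = b := by
      rcases (cycleG_adj.1 h).2 with hb | hb
      · exact ⟨1, Or.inl rfl, hb.symm⟩
      · exact ⟨-1, Or.inr rfl, by rw [hb]; ring⟩
    obtain ⟨ε, hε, hqε⟩ := ih hq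
    have hqδ : q.support = (List.range (q.length + 1)).map fun m : ℕ => a + δ + m * δ := by
      rcases Nat.eq_zero_or_pos q.length with h0 | hpos
      · simp [hqε, h0]
      · suffices ε = δ by rw [hqε, this]
        by_contra hne
        have hεδ : ε = -δ := by
          rcases hδ with rfl | rfl <;> rcases hε with rfl | rfl <;> simp_all
        refine ha (hqε ▸ List.mem_map.2 ⟨1, List.mem_range.2 (by omega), ?_⟩)
        rw [hεδ]; push_cast; ring
    refine ⟨δ, hδ, ?_⟩
    rw [Walk.support_cons, hqδ, Walk.length_cons, List.range_succ_eq_map (n := q.length + 1),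
      List.map_cons, List.map_map, Nat.cast_zero, zero_mul, add_zero]
    congr 1
    refine List.map_congr_left fun m _ => ?_
    simp only [Function.comp_apply, Nat.cast_succ]
    ring

lemma IsKVertexCover.inter_window_nonempty {X : Finset (ZMod n)}
    (hX : IsKVertexCover k (cycleG n) X) (hk : 0 < k) (hkn : k ≤ n) (a : ZMod n) :
    (X ∩ window a k).Nonempty := by
  obtain ⟨x, hxX, hxW⟩ := hX _ (window_isPathSupport hk hkn a)
  exact ⟨x, mem_inter.2 ⟨hxX, hxW⟩⟩

end Cycle

section Windows

variable {n k : ℕ} {X : Finset (ZMod n)}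

lemma card_window (hkn : k ≤ n) (a : ZMod n) : #(window a k) = k := by
  rw [window, card_image_of_injOn, card_range]
  intro i hi j hj hij
  simp only [coe_range, Set.mem_Iio] at hi hj
  exact ZMod.natCast_inj_of_lt (by omega) (by omega) (add_left_cancel hij)

lemma card_filter_mem_window [NeZero n] (hkn : k ≤ n) (x : ZMod n) :
    #{a | x ∈ window a k} = k := by
  have : ({a | x ∈ window a k} : Finset (ZMod n)) = (window 0 k).image (x - ·) := by
    ext a
    simp only [mem_filter, mem_univ, true_and, mem_image, mem_window, zero_add]
    constructor
    · rintro ⟨m, hm, rfl⟩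
      exact ⟨m, ⟨m, hm, rfl⟩, by ring⟩
    · rintro ⟨_, ⟨m, hm, rfl⟩, rfl⟩
      exact ⟨m, hm, by ring⟩
  rw [this, card_image_of_injective _ sub_right_injective, card_window hkn]

lemma sum_card_inter_window [NeZero n] (hkn : k ≤ n) :
    ∑ a, #(X ∩ window a k) = #X * k := by
  calc ∑ a, #(X ∩ window a k)
      = ∑ a, #(X.bipartiteAbove (fun a x => x ∈ window a k) a) := by
        simp [bipartiteAbove, filter_mem_eq_inter]
    _ = ∑ x ∈ X, #{a | x ∈ window a k} := sum_card_bipartiteAbove_eq_sum_card_bipartiteBelow _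
    _ = #X * k := by simp [card_filter_mem_window hkn]

lemma le_card_mul_of_inter_window_nonempty [NeZero n] (hkn : k ≤ n)
    (hX : ∀ a, (X ∩ window a k).Nonempty) : n ≤ #X * k :=
  calc n = ∑ _a : ZMod n, 1 := by simp [ZMod.card]
    _ ≤ ∑ a, #(X ∩ window a k) := sum_le_sum fun a _ => (hX a).card_pos
    _ = #X * k := sum_card_inter_window hkn

lemma card_inter_window_eq_one [NeZero n] (hkn : k ≤ n) (hX : ∀ a, (X ∩ window a k).Nonempty)
    (hcard : #X * k = n) (a : ZMod n) : #(X ∩ window a k) = 1 := by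
  have hsum : ∑ _a : ZMod n, 1 = ∑ a, #(X ∩ window a k) := by
    simp [sum_card_inter_window hkn, hcard, ZMod.card]
  exact ((sum_eq_sum_iff_of_le fun a _ => (hX a).card_pos).1 hsum a (mem_univ a)).symm

/-- The windows at `x` and `x + 1` differ only in `x` and `x + k`. -/
lemma add_mem_of_card_inter_window_eq_one (hkn : k ≤ n) (hX : ∀ a, #(X ∩ window a k) = 1)
    {x : ZMod n} (hx : x ∈ X) : x + k ∈ X := by
  obtain ⟨y, hy⟩ := card_eq_one.1 (hX (x + 1))
  obtain ⟨hyX, hyW⟩ := mem_inter.1 (hy ▸ mem_singleton_self y)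
  obtain ⟨m, hm, rfl⟩ := mem_window.1 hyW
  by_cases hmk : m + 1 < k
  · have hxW : x ∈ X ∩ window x k := mem_inter.2 ⟨hx, mem_window.2 ⟨0, by omega, by simp⟩⟩
    have hyW' : x + 1 + m ∈ X ∩ window x k :=
      mem_inter.2 ⟨hyX, mem_window.2 ⟨m + 1, hmk, by push_cast; ring⟩⟩
    have hyx := card_le_one.1 (hX x).le _ hyW' _ hxW
    have hdvd : n ∣ m + 1 := by
      rw [← ZMod.natCast_eq_zero_iff]
      push_cast
      linear_combination hyx
    exact absurd (Nat.le_of_dvd (by omega) hdvd) (by omega)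
  · obtain rfl : m + 1 = k := by omega
    convert hyX using 1
    push_cast
    ring

end Windows

section ResidueClasses

variable {p k : ℕ}

abbrev residueHom (p k : ℕ) : ZMod (p * k) →+* ZMod k :=
  ZMod.castHom (dvd_mul_left k p) (ZMod k)

lemma IsPathSupport.exists_residueHom_eq {S : Set (ZMod (p * k))}
    (hS : IsPathSupport k (cycleG (p * k)) S) (r : ZMod k) : ∃ y ∈ S, residueHom p k y = r := by
  obtain ⟨u, v, w, hw, hlen, rfl⟩ := hS
  obtain ⟨ε, hε, hsupp⟩ := exists_support_eq_of_isPath w hw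
  have hk : w.length + 1 = k := by rw [← w.length_support, hlen]
  have : NeZero k := ⟨by omega⟩
  have hεε : residueHom p k ε * residueHom p k ε = 1 := by
    rw [← map_mul]
    rcases hε with rfl | rfl <;> simp
  set m := ((r - residueHom p k u) * residueHom p k ε).val
  refine ⟨u + m * ε, ?_, ?_⟩
  · show _ ∈ w.support
    rw [hsupp, List.mem_map]
    exact ⟨m, List.mem_range.2 (by
      have := ZMod.val_lt ((r - residueHom p k u) * residueHom p k ε); omega), rfl⟩
  · simp only [map_add, map_mul, map_natCast, m, ZMod.natCast_zmod_val]
    linear_combination (r - residueHom p k u) * hεε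

variable [NeZero p] [NeZero k]

lemma residueHom_eq_iff {x y : ZMod (p * k)} :
    residueHom p k y = residueHom p k x ↔ ∃ j < p, y = x + ((j * k : ℕ) : ZMod (p * k)) := by
  constructor
  · intro h
    have hdvd : k ∣ (y - x).val := by
      rw [← ZMod.natCast_eq_zero_iff, ← ZMod.cast_eq_val,
        ← ZMod.castHom_apply (h := dvd_mul_left k p), map_sub, h, sub_self]
    obtain ⟨j, hj⟩ := hdvd
    have hlt : k * j < k * p := by rw [← hj, mul_comm k p]; exact ZMod.val_lt _
    refine ⟨j, Nat.lt_of_mul_lt_mul_left hlt, ?_⟩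
    rw [mul_comm j, ← hj, ZMod.natCast_zmod_val]
    ring
  · rintro ⟨j, -, rfl⟩
    simp

def residueClass (p k : ℕ) [NeZero p] [NeZero k] (r : ZMod k) : Finset (ZMod (p * k)) :=
  {y | residueHom p k y = r}

lemma residueClass_isKVertexCover (r : ZMod k) :
    IsKVertexCover k (cycleG (p * k)) (residueClass p k r) := fun _ hS => by
  obtain ⟨y, hyS, hy⟩ := hS.exists_residueHom_eq r
  exact ⟨y, mem_filter.2 ⟨mem_univ y, hy⟩, hyS⟩

lemma image_natCast_add_mul_eq_residueClass (i : ℕ) :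
    (Icc 1 p).image (fun j => ((i + (j - 1) * k : ℕ) : ZMod (p * k))) = residueClass p k i := by
  ext y
  simp only [residueClass, mem_image, mem_Icc, mem_filter, mem_univ, true_and]
  constructor
  · rintro ⟨j, -, rfl⟩
    simp
  · intro hy
    rw [← map_natCast (residueHom p k), residueHom_eq_iff] at hy
    obtain ⟨j, hj, rfl⟩ := hy
    exact ⟨j + 1, by omega, by push_cast; simp⟩

lemma IsKVertexCover.le_card {X : Finset (ZMod (p * k))}
    (hX : IsKVertexCover k (cycleG (p * k)) X) : p ≤ #X := by
  have hkn : k ≤ p * k := Nat.le_mul_of_pos_left k (NeZero.pos p)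
  exact Nat.le_of_mul_le_mul_right (le_card_mul_of_inter_window_nonempty hkn
    (hX.inter_window_nonempty (NeZero.pos k) hkn)) (NeZero.pos k)

lemma card_residueClass (r : ZMod k) : #(residueClass p k r) = p := by
  refine le_antisymm ?_ (residueClass_isKVertexCover r).le_card
  rw [← ZMod.natCast_zmod_val r, ← image_natCast_add_mul_eq_residueClass]
  exact card_image_le.trans (by simp)

lemma tauK_cycleG : tauK k (cycleG (p * k)) = p := by
  have hmem : p ∈ {n | ∃ X : Finset (ZMod (p * k)), IsKVertexCover k (cycleG (p * k)) X ∧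
      #X = n} := ⟨_, residueClass_isKVertexCover 0, card_residueClass 0⟩
  refine le_antisymm (Nat.sInf_le hmem) (le_csInf ⟨p, hmem⟩ ?_)
  rintro _ ⟨X, hX, rfl⟩
  exact hX.le_card

lemma IsKVertexCover.eq_residueClass {X : Finset (ZMod (p * k))}
    (hX : IsKVertexCover k (cycleG (p * k)) X) (hcard : #X = p) :
    ∃ r, X = residueClass p k r := by
  have hkn : k ≤ p * k := Nat.le_mul_of_pos_left k (NeZero.pos p)
  obtain ⟨x, hx⟩ : X.Nonempty := card_pos.1 (by rw [hcard]; exact NeZero.pos p)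
  have hone := card_inter_window_eq_one hkn (hX.inter_window_nonempty (NeZero.pos k) hkn)
    (by rw [hcard])
  have hsub : residueClass p k (residueHom p k x) ⊆ X := by
    intro y hy
    obtain ⟨j, -, rfl⟩ := residueHom_eq_iff.1 (mem_filter.1 hy).2
    clear hy
    induction j with
    | zero => simpa using hx
    | succ j ih =>
      simpa [add_mul, add_assoc] using add_mem_of_card_inter_window_eq_one hkn hone ih
  exact ⟨_, (eq_of_subset_of_card_le hsub (by rw [hcard, card_residueClass])).symm⟩

end ResidueClasses

lemma ZMod.exists_mem_Icc_natCast_eq {k : ℕ} [NeZero k] (r : ZMod k) :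
    ∃ i ∈ Icc 1 k, (i : ZMod k) = r := by
  by_cases hr : r = 0
  · exact ⟨k, mem_Icc.2 ⟨NeZero.pos k, le_rfl⟩, by simp [hr]⟩
  · exact ⟨r.val, mem_Icc.2 ⟨ZMod.val_pos.2 hr, (ZMod.val_lt r).le⟩, ZMod.natCast_zmod_val r⟩

theorem stmt4_general (k p : ℕ) (hk : 0 < k) (hp : 0 < p)
    (X : Finset (ZMod (p * k))) :
    (IsKVertexCover k (cycleG (p * k)) X ∧ X.card = tauK k (cycleG (p * k))) ↔
      ∃ i ∈ Finset.Icc 1 k,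
        X = (Finset.Icc 1 p).image (fun j => ((i + (j - 1) * k : ℕ) : ZMod (p * k))) := by
  have : NeZero k := ⟨hk.ne'⟩
  have : NeZero p := ⟨hp.ne'⟩
  simp_rw [image_natCast_add_mul_eq_residueClass, tauK_cycleG]
  constructor
  · rintro ⟨hX, hcard⟩
    obtain ⟨r, rfl⟩ := hX.eq_residueClass hcard
    obtain ⟨i, hi, rfl⟩ := ZMod.exists_mem_Icc_natCast_eq r
    exact ⟨i, hi, rfl⟩
  · rintro ⟨i, -, rfl⟩
    exact ⟨residueClass_isKVertexCover _, card_residueClass _⟩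

/-- A set `X` of vertices of `C_{pk}` is a minimum `k`-vertex cover of `C_{pk}`
if and only if `X = {u_{i+(j-1)k} : j ∈ [p]}` for some `i ∈ [k]`. -/
theorem stmt4 (k p : ℕ) (hk : 0 < k) (hp : 0 < p) (h3 : 3 ≤ p * k)
    (X : Finset (ZMod (p * k))) :
    (IsKVertexCover k (cycleG (p * k)) X ∧ X.card = tauK k (cycleG (p * k))) ↔
      ∃ i ∈ Finset.Icc 1 k,
        X = (Finset.Icc 1 p).image (fun j => ((i + (j - 1) * k : ℕ) : ZMod (p * k))) :=
  stmt4_general k p hk hp X
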